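/- Let A(e, M) := (Re ⊗ MRe)/|MRe|² + (Rᵀe ⊗ MRᵀe)/|MRᵀe|² − M⁻¹ for M ∈ GL₂(ℝ) and e a unit vector, R rotation by π/3. Then the directional derivative of M ↦ Φ(e, M) at M in direction N satisfies dΦ(e,M)[N] = ((Φ(e,M)² + 1)/Φ(e,M))·trace(A(e,M)N), where Φ(e,M) = sqrt(|MRe|²|MRᵀe|²/((3/4)(det M)²) − 1), assuming Φ(e,M) > 0. -/

import Mathlib

/-!
With `P = |MRe|²`, `Q = |MRᵀe|²`, `D = det M` (all along the line `M + τN`) we have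
`Φ² = f := PQ/((3/4)D²) − 1`, and logarithmic differentiation gives
`f' = (f + 1)(P'/P + Q'/Q − 2D'/D)`. Here `P' = 2(MRe|NRe) = 2 trace((Re ⊗ MRe)N)`, similarly
for `Q`, and Jacobi's formula gives `D'/D = trace(M⁻¹N)`; hence
`Φ' = f'/(2Φ) = ((Φ² + 1)/Φ) trace(A(e,M)N)`.
-/

open Matrix

noncomputable section

/-- The rotation matrix of angle `π/3`. -/
def R : Matrix (Fin 2) (Fin 2) ℝ :=
  !![1 / 2, -(Real.sqrt 3) / 2; Real.sqrt 3 / 2, 1 / 2]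

/-- The squared Euclidean norm of a vector in `ℝ²`. -/
def sqnorm (v : Fin 2 → ℝ) : ℝ := v 0 ^ 2 + v 1 ^ 2

/-- `Φ(e, M) = sqrt(|MRe|²·|MRᵀe|² / ((3/4)·(det M)²) − 1)`. -/
def Phi (e : Fin 2 → ℝ) (M : Matrix (Fin 2) (Fin 2) ℝ) : ℝ :=
  Real.sqrt (sqnorm (M.mulVec (R.mulVec e)) * sqnorm (M.mulVec (Rᵀ.mulVec e)) /
    ((3 / 4) * M.det ^ 2) - 1)

/-- The tensor field
`A(e, M) = (Re ⊗ MRe)/|MRe|² + (Rᵀe ⊗ MRᵀe)/|MRᵀe|² − M⁻¹`. -/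
def Amat (e : Fin 2 → ℝ) (M : Matrix (Fin 2) (Fin 2) ℝ) : Matrix (Fin 2) (Fin 2) ℝ :=
  (sqnorm (M.mulVec (R.mulVec e)))⁻¹ • vecMulVec (R.mulVec e) (M.mulVec (R.mulVec e))
    + (sqnorm (M.mulVec (Rᵀ.mulVec e)))⁻¹ •
        vecMulVec (Rᵀ.mulVec e) (M.mulVec (Rᵀ.mulVec e))
    - M⁻¹

open Polynomial in
theorem hasDerivAt_det_one_add_smul {𝕜 n : Type*} [NontriviallyNormedField 𝕜] [Fintype n]
    [DecidableEq n] (A : Matrix n n 𝕜) :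
    HasDerivAt (fun t : 𝕜 => (1 + t • A).det) A.trace 0 := by
  set p : 𝕜[X] := det (1 + (X : 𝕜[X]) • A.map C)
  have hp (t : 𝕜) : (1 + t • A).det = p.eval t := by
    rw [eval_det]
    congr 1
    ext i j
    by_cases h : i = j <;> simp [h, mul_comm]
  simpa only [hp, p, derivative_det_one_add_X_smul] using p.hasDerivAt 0

theorem hasDerivAt_det_add_smul {𝕜 n : Type*} [NontriviallyNormedField 𝕜] [Fintype n]
    [DecidableEq n] (M N : Matrix n n 𝕜) (hM : M.det ≠ 0) :
    HasDerivAt (fun t : 𝕜 => (M + t • N).det) (M.det * (M⁻¹ * N).trace) 0 := by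
  have hfactor (t : 𝕜) : M + t • N = M * (1 + t • (M⁻¹ * N)) := by
    rw [mul_add, mul_one, mul_smul_comm, ← mul_assoc, mul_nonsing_inv _ hM.isUnit, one_mul]
  simpa only [hfactor, det_mul] using (hasDerivAt_det_one_add_smul (M⁻¹ * N)).const_mul M.det

theorem hasDerivAt_dotProduct_self_add_smul {𝕜 n : Type*} [NontriviallyNormedField 𝕜]
    [Fintype n] (a b : n → 𝕜) :
    HasDerivAt (fun t : 𝕜 => (a + t • b) ⬝ᵥ (a + t • b)) (2 * (a ⬝ᵥ b)) 0 := by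
  have hexpand (t : 𝕜) :
      (a + t • b) ⬝ᵥ (a + t • b) = a ⬝ᵥ a + t * (2 * (a ⬝ᵥ b)) + t ^ 2 * (b ⬝ᵥ b) := by
    simp only [add_dotProduct, dotProduct_add, smul_dotProduct, dotProduct_smul, smul_eq_mul,
      dotProduct_comm b a]
    ring
  simp only [hexpand]
  simpa using (((hasDerivAt_id (0 : 𝕜)).mul_const (2 * (a ⬝ᵥ b))).const_add (a ⬝ᵥ a)).fun_add
    (((hasDerivAt_id (0 : 𝕜)).pow 2).mul_const (b ⬝ᵥ b))

theorem trace_vecMulVec_mulVec_mul {α n : Type*} [CommSemiring α] [Fintype n]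
    (M N : Matrix n n α) (v : n → α) :
    (vecMulVec v (M *ᵥ v) * N).trace = M *ᵥ v ⬝ᵥ N *ᵥ v := by
  rw [vecMulVec_mul, trace_vecMulVec, dotProduct_comm, ← dotProduct_mulVec]

theorem sqnorm_eq_dotProduct_self (v : Fin 2 → ℝ) : sqnorm v = v ⬝ᵥ v := by
  simp [sqnorm, dotProduct, Fin.sum_univ_two, sq]

theorem hasDerivAt_sqnorm_add_smul_mulVec (M N : Matrix (Fin 2) (Fin 2) ℝ) (v : Fin 2 → ℝ) :
    HasDerivAt (fun t : ℝ => sqnorm ((M + t • N) *ᵥ v)) (2 * (M *ᵥ v ⬝ᵥ N *ᵥ v)) 0 := by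
  simpa only [sqnorm_eq_dotProduct_self, add_mulVec, smul_mulVec] using
    hasDerivAt_dotProduct_self_add_smul (M *ᵥ v) (N *ᵥ v)

theorem trace_Amat_mul (e : Fin 2 → ℝ) (M N : Matrix (Fin 2) (Fin 2) ℝ) :
    (Amat e M * N).trace =
      (M *ᵥ R *ᵥ e ⬝ᵥ N *ᵥ R *ᵥ e) / sqnorm (M *ᵥ R *ᵥ e)
        + (M *ᵥ Rᵀ *ᵥ e ⬝ᵥ N *ᵥ Rᵀ *ᵥ e) / sqnorm (M *ᵥ Rᵀ *ᵥ e) - (M⁻¹ * N).trace := by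
  simp only [Amat, sub_mul, add_mul, smul_mul, trace_sub, trace_add, trace_smul, smul_eq_mul,
    trace_vecMulVec_mulVec_mul, inv_mul_eq_div]

theorem HasDerivAt.sqrt_mul_div_sq_sub_one {P Q D : ℝ → ℝ} {P' Q' D' c x : ℝ}
    (hP : HasDerivAt P P' x) (hQ : HasDerivAt Q Q' x) (hD : HasDerivAt D D' x)
    (hpos : 0 < P x * Q x / (c * D x ^ 2) - 1) :
    HasDerivAt (fun t => √(P t * Q t / (c * D t ^ 2) - 1))
      ((√(P x * Q x / (c * D x ^ 2) - 1) ^ 2 + 1) / √(P x * Q x / (c * D x ^ 2) - 1) *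
        (P' / (2 * P x) + Q' / (2 * Q x) - D' / D x)) x := by
  -- a vanishing factor would make the radicand `-1` (recall `a / 0 = 0`)
  have hne : P x ≠ 0 ∧ Q x ≠ 0 ∧ c ≠ 0 ∧ D x ≠ 0 := by
    refine ⟨?_, ?_, ?_, ?_⟩ <;> intro h <;> norm_num [h] at hpos
  obtain ⟨hPx, hQx, hc, hDx⟩ := hne
  have hden : c * D x ^ 2 ≠ 0 := by positivity
  refine (((hP.fun_mul hQ).fun_div ((hD.pow 2).const_mul c) hden).sub_const 1).sqrt
    hpos.ne' |>.congr_deriv ?_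
  simp only [Pi.pow_apply, Real.sq_sqrt hpos.le]
  have hs := (Real.sqrt_pos.mpr hpos).ne'
  field_simp
  ring

theorem hasDerivAt_Phi_general (e : Fin 2 → ℝ)
    (M N : Matrix (Fin 2) (Fin 2) ℝ) (hdet : M.det ≠ 0)
    (hpos : 0 < sqnorm (M.mulVec (R.mulVec e)) * sqnorm (M.mulVec (Rᵀ.mulVec e)) /
      ((3 / 4) * M.det ^ 2) - 1) :
    HasDerivAt (fun τ : ℝ => Phi e (M + τ • N))
      (((Phi e M) ^ 2 + 1) / Phi e M * (Amat e M * N).trace) 0 := by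
  have h := HasDerivAt.sqrt_mul_div_sq_sub_one (c := 3 / 4)
    (hasDerivAt_sqnorm_add_smul_mulVec M N (R *ᵥ e))
    (hasDerivAt_sqnorm_add_smul_mulVec M N (Rᵀ *ᵥ e)) (hasDerivAt_det_add_smul M N hdet)
    (by simpa only [zero_smul, add_zero] using hpos)
  simp only [zero_smul, add_zero] at h
  refine h.congr_deriv ?_
  rw [trace_Amat_mul, Phi]
  field_simp

/-- The directional derivative of `M ↦ Φ(e, M)` at `M` in the direction `N` equals
`((Φ(e,M)² + 1)/Φ(e,M))·trace(A(e,M)·N)`, provided the radicand defining `Φ(e,M)` is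
strictly positive (so that `Φ(e,M) > 0` and `Φ(e,·)` is differentiable at `M`). -/
theorem hasDerivAt_Phi (e : Fin 2 → ℝ) (he : sqnorm e = 1)
    (M N : Matrix (Fin 2) (Fin 2) ℝ) (hdet : M.det ≠ 0)
    (hpos : 0 < sqnorm (M.mulVec (R.mulVec e)) * sqnorm (M.mulVec (Rᵀ.mulVec e)) /
      ((3 / 4) * M.det ^ 2) - 1) :
    HasDerivAt (fun τ : ℝ => Phi e (M + τ • N))
      (((Phi e M) ^ 2 + 1) / Phi e M * (Amat e M * N).trace) 0 :=
  hasDerivAt_Phi_general e M N hdet hpos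

end
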